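/- arXiv:1412.4709 — 5 statements merged into one kernel-verified Lean document; each statement's English description precedes it below -/
import Mathlib

section
/- Let r1, r2, h, ε be positive reals with εh ≤ r1 + r2 ≤ h, and let p1 = (x1,y1), p2 = (x2,y2) be points in ℝ² with y1 ≥ y2 and dist(p1,p2) ≥ r1 + r2 − εh. Then the point p1' = (x1, y1 + √(2ε)·h) satisfies dist(p1', p2) ≥ r1 + r2. -/
/-- Lifting lemma for circles: raising the upper circle's center vertically by
`√(2ε)·h` removes an overlap of at most `ε·h`. -/
theorem stmt0 (r1 r2 h ε x1 y1 x2 y2 : ℝ)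
    (hr1 : 0 < r1) (hr2 : 0 < r2) (hh : 0 < h) (hε : 0 < ε)
    (h1 : ε * h ≤ r1 + r2) (h2 : r1 + r2 ≤ h)
    (hy : y1 ≥ y2)
    (hd : Real.sqrt ((x1 - x2) ^ 2 + (y1 - y2) ^ 2) ≥ r1 + r2 - ε * h) :
    Real.sqrt ((x1 - x2) ^ 2 + (y1 + Real.sqrt (2 * ε) * h - y2) ^ 2) ≥ r1 + r2 := by
  have hs : Real.sqrt (2 * ε) ^ 2 = 2 * ε := Real.sq_sqrt (by linarith)
  have hsnn : 0 ≤ Real.sqrt (2 * ε) := Real.sqrt_nonneg _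
  have hab : (0:ℝ) ≤ (x1 - x2) ^ 2 + (y1 - y2) ^ 2 := by positivity
  have hd2 : (r1 + r2 - ε * h) ^ 2 ≤ (x1 - x2) ^ 2 + (y1 - y2) ^ 2 := by
    have := Real.sq_sqrt hab
    nlinarith [Real.sqrt_nonneg ((x1 - x2) ^ 2 + (y1 - y2) ^ 2), sub_nonneg.mpr h1]
  rw [ge_iff_le, show r1 + r2 = √((r1 + r2) ^ 2) from (Real.sqrt_sq (by linarith)).symm]
  apply Real.sqrt_le_sqrt
  nlinarith [mul_nonneg (mul_nonneg hsnn hh.le) (sub_nonneg.mpr hy), mul_le_mul_of_nonneg_left h2 (mul_pos hε hh).le, sq_nonneg (ε * h), sq_nonneg (√(2 * ε) * h)]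
end

section
/- Let (p_i)_{i=1}^n be points in ℝ² that form an (εh)-packing of circles with radii r_1,…,r_n (each r_i ≤ min(w,h)/2) into a w×h rectangle, for some ε > 0, meaning: dist(p_i,p_j) ≥ r_i + r_j − εh ≥ 0 for all i < j, and r_i − εh ≤ x_i ≤ w − r_i + εh, r_i − εh ≤ y_i ≤ h − r_i + εh for all i. Then there exist points (p_i'')_{i=1}^n giving a genuine (overlap-free) packing of the same circles into a rectangle of width w and height (1 + n√(6ε))·h, i.e., dist(p_i'', p_j'') ≥ r_i + r_j for all i ≠ j and each circle is fully contained in the enlarged rectangle. -/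
set_option maxHeartbeats 1000000

lemma lift_key (dx dy e δ s ε h k : ℝ)
    (hd : s - ε*h ≤ Real.sqrt (dx^2 + dy^2))
    (hdy : 0 ≤ dy) (hδsq : δ^2 = 6*ε*h^2) (hδ0 : 0 ≤ δ) (hk : 1 ≤ k)
    (he : |e| ≤ 2*ε*h) (hs : 0 < s) (hsh : s ≤ h) (hh : 0 < h)
    (hε : 0 < ε) (hε6 : ε ≤ 1/6) :
    s ≤ Real.sqrt ((dx+e)^2 + (dy + k*δ)^2) := by
  set d := Real.sqrt (dx^2 + dy^2) with hddef
  have hd2 : d^2 = dx^2 + dy^2 := Real.sq_sqrt (by positivity)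
  have hd0 : 0 ≤ d := Real.sqrt_nonneg _
  have hdx : |dx| ≤ d := by
    rw [hddef, ← Real.sqrt_sq_eq_abs]
    exact Real.sqrt_le_sqrt (by nlinarith [sq_nonneg dy])
  have hedx : -(2*ε*h*d) ≤ e * dx := by
    have h1 : |e * dx| ≤ (2*ε*h) * d := by
      rw [abs_mul]
      exact mul_le_mul he hdx (abs_nonneg _) (by positivity)
    have := neg_abs_le (e * dx)
    linarith
  have habs := abs_le.mp he
  have hdyk : dy + δ ≤ dy + k*δ := by nlinarith
  have key : s^2 ≤ (dx+e)^2 + (dy + k*δ)^2 := by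
    have h2 : (dy+δ)^2 ≤ (dy+k*δ)^2 := by nlinarith
    have h3 : s^2 ≤ (dx+e)^2 + (dy+δ)^2 := by
      rcases le_or_gt s (3*ε*h) with hc | hc
      · have e1 : δ^2 ≤ (dy+δ)^2 := by nlinarith [mul_nonneg hdy hδ0, sq_nonneg dy]
        have e2 : s^2 ≤ 3*ε*h*h := by nlinarith
        have e3 : (0:ℝ) ≤ (dx+e)^2 := sq_nonneg _
        nlinarith [mul_pos hε (mul_pos hh hh)]
      · have hd' : 2*ε*h < d := by linarith
        have q1 : (0:ℝ) ≤ (d - (s - ε*h)) * (d + s - 5*ε*h) :=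
          mul_nonneg (by linarith) (by linarith)
        have q2 : d^2 - 4*(ε*h)*d ≥ s^2 - 6*(ε*h)*s + 5*(ε*h)^2 := by nlinarith
        have q3 : (0:ℝ) ≤ (ε*h) * (h - s) := by
          apply mul_nonneg (by positivity); linarith
        nlinarith [mul_nonneg hdy hδ0, sq_nonneg e]
    linarith
  calc s = Real.sqrt (s^2) := (Real.sqrt_sq hs.le).symm
    _ ≤ _ := Real.sqrt_le_sqrt key

/-- Transforming an `(εh)`-packing of circles into a `w × h` rectangle into a
genuine packing into a rectangle of width `w` and height `(1 + n√(6ε))h`. -/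
theorem stmt6 (n : ℕ) (w h ε : ℝ) (r x y : Fin n → ℝ)
    (hw : 0 < w) (hh : 0 < h) (hε : 0 < ε)
    (hr : ∀ i, 0 < r i ∧ r i ≤ min w h / 2)
    (hdist : ∀ i j, i < j → r i + r j - ε * h ≥ 0 ∧
      Real.sqrt ((x i - x j) ^ 2 + (y i - y j) ^ 2) ≥ r i + r j - ε * h)
    (hbx : ∀ i, r i - ε * h ≤ x i ∧ x i ≤ w - r i + ε * h)
    (hby : ∀ i, r i - ε * h ≤ y i ∧ y i ≤ h - r i + ε * h) :
    ∃ x' y' : Fin n → ℝ,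
      (∀ i j, i ≠ j →
        Real.sqrt ((x' i - x' j) ^ 2 + (y' i - y' j) ^ 2) ≥ r i + r j) ∧
      (∀ i, r i ≤ x' i ∧ x' i ≤ w - r i ∧ r i ≤ y' i ∧
        y' i ≤ (1 + n * Real.sqrt (6 * ε)) * h - r i) := by
  have hrw : ∀ i, r i ≤ w / 2 := fun i => by
    have := (hr i).2; have := min_le_left w h; linarith
  have hrh : ∀ i, r i ≤ h / 2 := fun i => by
    have := (hr i).2; have := min_le_right w h; linarith
  rcases le_or_gt (1/6 : ℝ) ε with hbig | hsmall
  · -- trivial stacked packing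
    have hsq1 : (1:ℝ) ≤ Real.sqrt (6*ε) := by
      rw [show (1:ℝ) = Real.sqrt 1 by simp]
      exact Real.sqrt_le_sqrt (by linarith)
    refine ⟨fun i => r i, fun i => (i : ℕ) * h + r i, ?_, ?_⟩
    · intro i j hij
      have hgoal : ∀ i j : Fin n, i < j →
          r i + r j ≤ Real.sqrt ((r i - r j)^2 + (((i:ℕ)*h + r i) - ((j:ℕ)*h + r j))^2) := by
        intro i j hlt
        have hji : (i:ℝ) + 1 ≤ (j:ℕ) := by exact_mod_cast hlt
        have hdy : ((j:ℕ)*h + r j) - ((i:ℕ)*h + r i) ≥ r i + r j := by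
          have : ((j:ℕ):ℝ)*h - ((i:ℕ):ℝ)*h ≥ h := by nlinarith
          have := hrh i; linarith
        have hs0 : 0 ≤ r i + r j := by have := (hr i).1; have := (hr j).1; linarith
        calc r i + r j = Real.sqrt ((r i + r j)^2) := (Real.sqrt_sq hs0).symm
          _ ≤ _ := Real.sqrt_le_sqrt (by nlinarith [sq_nonneg (r i - r j)])
      rcases lt_or_gt_of_ne hij with h1 | h1
      · exact hgoal i j h1
      · have := hgoal j i h1
        rw [show (r j - r i)^2 = (r i - r j)^2 by ring,
          show (((j:ℕ)*h + r j) - ((i:ℕ)*h + r i))^2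
            = (((i:ℕ)*h + r i) - ((j:ℕ)*h + r j))^2 by ring] at this
        linarith
    · intro i
      have h1 : (0:ℝ) ≤ (i:ℕ) * h := by positivity
      have h2 : ((i:ℕ):ℝ) ≤ (n:ℝ) - 1 := by
        have h4 : (i:ℕ) + 1 ≤ n := i.isLt
        have h5 : ((i:ℕ):ℝ) + 1 ≤ (n:ℝ) := by exact_mod_cast h4
        linarith
      refine ⟨le_refl _, by linarith [hrw i], ?_, ?_⟩
      · show r i ≤ (i:ℕ) * h + r i
        linarith
      have h3 : (n:ℝ) * 1 ≤ (n:ℝ) * Real.sqrt (6*ε) :=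
        mul_le_mul_of_nonneg_left hsq1 (Nat.cast_nonneg n)
      have := hrh i
      show (i:ℕ) * h + r i ≤ (1 + n * Real.sqrt (6*ε)) * h - r i
      nlinarith
  · -- main construction
    set δ := Real.sqrt (6*ε) * h with hδdef
    have hδ0 : 0 ≤ δ := by positivity
    have hδsq : δ^2 = 6*ε*h^2 := by
      rw [hδdef, mul_pow, Real.sq_sqrt (by linarith)]
    have h2ε : 2*ε*h ≤ δ := by
      have : 2*ε ≤ Real.sqrt (6*ε) := by
        rw [show (2*ε) = Real.sqrt ((2*ε)^2) from (Real.sqrt_sq (by linarith)).symm]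
        exact Real.sqrt_le_sqrt (by nlinarith)
      calc 2*ε*h = (2*ε)*h := by ring
        _ ≤ Real.sqrt (6*ε) * h := mul_le_mul_of_nonneg_right this hh.le
    set R : Fin n → ℕ := fun i =>
      (Finset.univ.filter (fun j => y j < y i ∨ (y j = y i ∧ j < i))).card with hRdef
    have hRlt : ∀ i j : Fin n, (y j < y i ∨ (y j = y i ∧ j < i)) → R j < R i := by
      intro i j hji
      have hsub : insert j (Finset.univ.filter (fun k => y k < y j ∨ (y k = y j ∧ k < j)))
          ⊆ Finset.univ.filter (fun k => y k < y i ∨ (y k = y i ∧ k < i)) := by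
        intro k hk
        simp only [Finset.mem_insert, Finset.mem_filter, Finset.mem_univ, true_and] at *
        rcases hk with rfl | hk
        · exact hji
        · rcases hji with h1 | ⟨h1, h2⟩
          · rcases hk with h3 | ⟨h3, h4⟩
            · exact Or.inl (h3.trans h1)
            · exact Or.inl (h3 ▸ h1)
          · rcases hk with h3 | ⟨h3, h4⟩
            · exact Or.inl (h1 ▸ h3)
            · exact Or.inr ⟨h3.trans h1, h4.trans h2⟩
      have hjnot : j ∉ Finset.univ.filter (fun k => y k < y j ∨ (y k = y j ∧ k < j)) := by
        simp
      have := Finset.card_le_card hsub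
      rw [Finset.card_insert_of_notMem hjnot] at this
      exact this
    have hRle : ∀ i, (R i : ℝ) ≤ (n:ℝ) - 1 := by
      intro i
      have hsub : Finset.univ.filter (fun k => y k < y i ∨ (y k = y i ∧ k < i))
          ⊆ Finset.univ.erase i := by
        intro k hk
        simp only [Finset.mem_filter, Finset.mem_univ, true_and, Finset.mem_erase] at *
        constructor
        · rintro rfl; rcases hk with h1 | ⟨h1, h2⟩ <;> simp_all
        · trivial
      have h1 := Finset.card_le_card hsub
      rw [Finset.card_erase_of_mem (Finset.mem_univ i), Finset.card_univ, Fintype.card_fin] at h1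
      have hn : 1 ≤ n := i.pos
      have : R i ≤ n - 1 := h1
      have := Nat.cast_le (α := ℝ) |>.mpr this
      rwa [Nat.cast_sub hn, Nat.cast_one] at this
    set x' : Fin n → ℝ := fun i => max (r i) (min (x i) (w - r i)) with hx'def
    set y' : Fin n → ℝ := fun i => y i + ε*h + (R i : ℝ) * δ with hy'def
    have hx'eq : ∀ i, x' i = max (r i) (min (x i) (w - r i)) := fun i => rfl
    have hy'eq : ∀ i, y' i = y i + ε*h + (R i : ℝ) * δ := fun i => rfl
    have hεh : 0 < ε*h := mul_pos hε hh
    have hclamp : ∀ i, |x' i - x i| ≤ ε*h := by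
      intro i
      rcases hbx i with ⟨hb1, hb2⟩
      rw [abs_le, hx'eq]
      constructor
      · have h1 : x i - ε*h ≤ min (x i) (w - r i) := le_min (by linarith) (by linarith)
        have h2 := h1.trans (le_max_right (r i) (min (x i) (w - r i)))
        linarith
      · have h1 : max (r i) (min (x i) (w - r i)) ≤ max (r i) (x i) :=
          max_le_max (le_refl _) (min_le_left _ _)
        have h2 : max (r i) (x i) ≤ x i + ε*h := max_le (by linarith) (by linarith)
        linarith
    have hx'lb : ∀ i, r i ≤ x' i := fun i => (hx'eq i) ▸ le_max_left _ _
    have hx'ub : ∀ i, x' i ≤ w - r i := fun i =>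
      (hx'eq i) ▸ max_le (by linarith [hrw i]) (min_le_right _ _)
    refine ⟨x', y', ?_, ?_⟩
    · -- distances
      have key : ∀ i j : Fin n, (y j < y i ∨ (y j = y i ∧ j < i)) →
          r i + r j ≤ Real.sqrt ((x' i - x' j)^2 + (y' i - y' j)^2) := by
        intro i j hji
        have hij : i ≠ j := by
          rintro rfl; rcases hji with h1 | ⟨h1, h2⟩ <;> simp_all
        have hdy0 : 0 ≤ y i - y j := by
          rcases hji with h1 | ⟨h1, _⟩ <;> linarith
        have hRij := hRlt i j hji
        have hk1 : (1:ℝ) ≤ (R i : ℝ) - (R j : ℝ) := by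
          have : R j + 1 ≤ R i := hRij
          have := Nat.cast_le (α := ℝ) |>.mpr this
          push_cast at this; linarith
        have hd : r i + r j - ε*h ≤ Real.sqrt ((x i - x j)^2 + (y i - y j)^2) := by
          rcases lt_or_gt_of_ne hij with h1 | h1
          · exact (hdist i j h1).2
          · have h9 := (hdist j i h1).2
            rw [show (x j - x i)^2 = (x i - x j)^2 by ring,
              show (y j - y i)^2 = (y i - y j)^2 by ring] at h9
            linarith
        have he : |(x' i - x i) - (x' j - x j)| ≤ 2*(ε*h) := by
          calc |(x' i - x i) - (x' j - x j)| ≤ |x' i - x i| + |x' j - x j| :=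
                abs_sub _ _
            _ ≤ 2*(ε*h) := by linarith [hclamp i, hclamp j]
        have hs : 0 < r i + r j := by linarith [(hr i).1, (hr j).1]
        have hsh : r i + r j ≤ h := by linarith [hrh i, hrh j]
        have := lift_key (x i - x j) (y i - y j) ((x' i - x i) - (x' j - x j)) δ
          (r i + r j) ε h ((R i : ℝ) - (R j : ℝ)) (by linarith) hdy0 hδsq hδ0 hk1
          (by linarith [he]) hs hsh hh hε (by linarith)
        have heq1 : (x i - x j) + ((x' i - x i) - (x' j - x j)) = x' i - x' j := by ring
        have heq2 : (y i - y j) + ((R i : ℝ) - (R j : ℝ)) * δ = y' i - y' j := by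
          rw [hy'eq, hy'eq]; ring
        rwa [heq1, heq2] at this
      intro i j hij
      rcases lt_trichotomy (y j) (y i) with h1 | h1 | h1
      · exact key i j (Or.inl h1)
      · rcases lt_or_gt_of_ne hij with h2 | h2
        · have := key j i (Or.inr ⟨h1.symm, h2⟩)
          rw [show (x' j - x' i)^2 = (x' i - x' j)^2 by ring,
            show (y' j - y' i)^2 = (y' i - y' j)^2 by ring] at this
          linarith
        · exact key i j (Or.inr ⟨h1, h2⟩)
      · have := key j i (Or.inl h1)
        rw [show (x' j - x' i)^2 = (x' i - x' j)^2 by ring,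
          show (y' j - y' i)^2 = (y' i - y' j)^2 by ring] at this
        linarith
    · -- bounds
      intro i
      rcases hby i with ⟨hb1, hb2⟩
      have hR0 : (0:ℝ) ≤ (R i : ℝ) * δ := mul_nonneg (Nat.cast_nonneg _) hδ0
      refine ⟨hx'lb i, hx'ub i, by rw [hy'eq]; linarith, ?_⟩
      have hRu : (R i : ℝ) * δ ≤ ((n:ℝ) - 1) * δ :=
        mul_le_mul_of_nonneg_right (hRle i) hδ0
      have hnδ : (n:ℝ) * Real.sqrt (6*ε) * h = (n:ℝ) * δ := by rw [hδdef]; ring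
      rw [hy'eq]
      have hn1 : (1:ℝ) ≤ (n:ℝ) := by exact_mod_cast i.pos
      nlinarith [hδ0]
end

section
/- Let C be a circle of radius r_c with 2r_c ≥ W, packed in a rectangle, and consider a grid of axis-parallel cells each of width εW and height (1+γ)εW overlaid on the rectangle, where 0 < ε ≤ 1/8 and γ ≥ 0. Let D be the set of grid cells that intersect C but are not contained in C. Then Area(D) ≤ (1+γ)·16ε·Area(C). -/
/-!
Write `w = εW` and `h = (1 + γ)εW`. Shrunk to half-open rectangles, the cells are pairwise
disjoint and keep their area `w h`, so `|D| w h` is at most the area of any region containing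
all cells of `D`. A cell of `D` has a point inside `C` and a point outside, and its diameter
is at most `d = w + h`, so it lies in the annulus `r - d ≤ |z - c| ≤ r + d`, of area
`4π r d ≤ 16 (1 + γ) ε π r²`. If `d > r` this bound is useless; but then `h > 3r/4`, and the
box `[c - r - w, c + r + w] × [c - r - h, c + r + h]` containing all cells that meet `C` has
area `4 (r + w)(r + h) ≤ 4π r h ≤ 8 (1 + γ) ε π r²`.
-/

open MeasureTheory Metric Set Complex Function

namespace Complex

theorem volume_reProdIm (s t : Set ℝ) : volume (s ×ℂ t) = volume s * volume t := by
  have h : s ×ℂ t = measurableEquivRealProd ⁻¹' (s ×ˢ t) := rfl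
  rw [h, volume_preserving_equiv_real_prod.measure_preimage_equiv, Measure.volume_eq_prod,
    Measure.prod_prod]

theorem volume_closedBall_diff_ball (c : ℂ) {s t : ℝ} (hs : 0 ≤ s) (hst : s ≤ t) :
    volume (closedBall c t \ ball c s) = ENNReal.ofReal (Real.pi * (t ^ 2 - s ^ 2)) := by
  rw [measure_sdiff (ball_subset_closedBall.trans (closedBall_subset_closedBall hst))
      measurableSet_ball.nullMeasurableSet measure_ball_lt_top.ne,
    volume_ball, volume_closedBall, ← ENNReal.ofReal_coe_nnreal, NNReal.coe_real_pi,
    ← ENNReal.ofReal_pow (hs.trans hst), ← ENNReal.ofReal_pow hs,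
    ← ENNReal.ofReal_mul (by positivity), ← ENNReal.ofReal_mul (by positivity),
    ← ENNReal.ofReal_sub _ (by positivity)]
  ring_nf

theorem dist_le_iff_sq {z c : ℂ} {r : ℝ} (hr : 0 ≤ r) :
    dist z c ≤ r ↔ (z.re - c.re) ^ 2 + (z.im - c.im) ^ 2 ≤ r ^ 2 := by
  rw [dist_eq_re_im, Real.sqrt_le_left hr]

theorem le_dist_iff_sq {z c : ℂ} {r : ℝ} (hr : 0 ≤ r) :
    r ≤ dist z c ↔ r ^ 2 ≤ (z.re - c.re) ^ 2 + (z.im - c.im) ^ 2 := by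
  rw [dist_eq_re_im, Real.le_sqrt hr (by positivity)]

end Complex

theorem MeasurableSet.reProdIm {s t : Set ℝ} (hs : MeasurableSet s) (ht : MeasurableSet t) :
    MeasurableSet (s ×ℂ t) :=
  (measurable_re hs).inter (measurable_im ht)

theorem pairwise_disjoint_Ico_intCast_mul (w : ℝ) :
    Pairwise (Disjoint on fun m : ℤ => Ico (m * w) ((m + 1) * w)) := by
  simpa [zsmul_eq_mul] using pairwise_disjoint_Ico_add_zsmul (0 : ℝ) w

theorem abs_sub_le_of_mem_Icc {a b x y : ℝ} (hx : x ∈ Icc a b) (hy : y ∈ Icc a b) :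
    |x - y| ≤ b - a := by
  rw [abs_sub_le_iff]
  constructor <;> linarith [hx.1, hx.2, hy.1, hy.2]

def gridCell (w h : ℝ) (mn : ℤ × ℤ) : Set ℂ :=
  Icc (mn.1 * w) ((mn.1 + 1) * w) ×ℂ Icc (mn.2 * h) ((mn.2 + 1) * h)

section GridCell

variable {w h : ℝ} {mn : ℤ × ℤ}

theorem ofReal_card_mul_le_volume_of_gridCell_subset (hw : 0 ≤ w)
    {S : Finset (ℤ × ℤ)} {A : Set ℂ} (hA : ∀ mn ∈ S, gridCell w h mn ⊆ A) :
    ENNReal.ofReal (S.card * (w * h)) ≤ volume A := by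
  set T : ℤ × ℤ → Set ℂ := fun mn =>
    Ico (mn.1 * w) ((mn.1 + 1) * w) ×ℂ Ico (mn.2 * h) ((mn.2 + 1) * h)
  have hT_disj : Pairwise (Disjoint on T) := by
    rintro ⟨m, n⟩ ⟨m', n'⟩ hne
    rcases ne_or_eq m m' with hm | rfl
    · exact ((pairwise_disjoint_Ico_intCast_mul w hm).preimage re).mono
        inter_subset_left inter_subset_left
    · have hn : n ≠ n' := fun hnn => hne (by rw [hnn])
      exact ((pairwise_disjoint_Ico_intCast_mul h hn).preimage im).mono
        inter_subset_right inter_subset_right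
  have hT_vol : ∀ mn, volume (T mn) = ENNReal.ofReal (w * h) := by
    intro mn
    simp only [T, volume_reProdIm, Real.volume_Ico]
    rw [← ENNReal.ofReal_mul (by linarith)]
    congr 1
    ring
  calc ENNReal.ofReal (S.card * (w * h)) = ∑ mn ∈ S, volume (T mn) := by
        rw [ENNReal.ofReal_mul (by positivity), ENNReal.ofReal_natCast,
          Finset.sum_congr rfl fun mn _ => hT_vol mn, Finset.sum_const, nsmul_eq_mul]
    _ = volume (⋃ mn ∈ S, T mn) :=
        (measure_biUnion_finset (hT_disj.set_pairwise _)
          fun _ _ => measurableSet_Ico.reProdIm measurableSet_Ico).symm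
    _ ≤ volume A := measure_mono <| iUnion₂_subset fun mn hmn =>
        (reProdIm_subset_iff.mpr (prod_mono Ico_subset_Icc_self Ico_subset_Icc_self)).trans
          (hA mn hmn)

theorem abs_re_sub_le_of_mem_gridCell {z u : ℂ} (hz : z ∈ gridCell w h mn)
    (hu : u ∈ gridCell w h mn) : |z.re - u.re| ≤ w :=
  (abs_sub_le_of_mem_Icc hz.1 hu.1).trans_eq (by ring)

theorem abs_im_sub_le_of_mem_gridCell {z u : ℂ} (hz : z ∈ gridCell w h mn)
    (hu : u ∈ gridCell w h mn) : |z.im - u.im| ≤ h :=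
  (abs_sub_le_of_mem_Icc hz.2 hu.2).trans_eq (by ring)

theorem dist_le_of_mem_gridCell {z u : ℂ} (hz : z ∈ gridCell w h mn)
    (hu : u ∈ gridCell w h mn) : dist z u ≤ w + h := by
  have hre := abs_re_sub_le_of_mem_gridCell hz hu
  have him := abs_im_sub_le_of_mem_gridCell hz hu
  calc dist z u ≤ |z.re - u.re| + |z.im - u.im| := by
        simpa [dist_eq] using norm_le_abs_re_add_abs_im (z - u)
    _ ≤ w + h := by linarith

theorem gridCell_subset_closedBall_diff_ball {c z₀ z₁ : ℂ} {r : ℝ}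
    (hz₀ : z₀ ∈ gridCell w h mn) (hz₀c : dist z₀ c ≤ r)
    (hz₁ : z₁ ∈ gridCell w h mn) (hz₁c : r ≤ dist z₁ c) :
    gridCell w h mn ⊆ closedBall c (r + (w + h)) \ ball c (r - (w + h)) := by
  intro z hz
  have h₀ := dist_le_of_mem_gridCell hz hz₀
  have h₁ := dist_le_of_mem_gridCell hz₁ hz
  refine ⟨?_, ?_⟩
  · rw [mem_closedBall]; linarith [dist_triangle z z₀ c]
  · rw [mem_ball, not_lt]; linarith [dist_triangle z₁ z c]

theorem gridCell_subset_reProdIm_Icc {c z₀ : ℂ} {r : ℝ}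
    (hz₀ : z₀ ∈ gridCell w h mn) (hz₀c : dist z₀ c ≤ r) :
    gridCell w h mn ⊆
      Icc (c.re - (r + w)) (c.re + (r + w)) ×ℂ Icc (c.im - (r + h)) (c.im + (r + h)) := by
  intro z hz
  have hre := abs_re_sub_le_of_mem_gridCell hz hz₀
  have him := abs_im_sub_le_of_mem_gridCell hz hz₀
  have hre₀ : |z₀.re - c.re| ≤ r := (abs_re_le_norm (z₀ - c)).trans (by rwa [← dist_eq])
  have him₀ : |z₀.im - c.im| ≤ r := (abs_im_le_norm (z₀ - c)).trans (by rwa [← dist_eq])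
  refine ⟨mem_Icc_iff_abs_le.mp ?_, mem_Icc_iff_abs_le.mp ?_⟩ <;> rw [abs_sub_comm]
  · linarith [abs_sub_le z.re z₀.re c.re]
  · linarith [abs_sub_le z.im z₀.im c.im]

theorem card_mul_le_of_gridCell_meets_sphere (hw : 0 ≤ w) (hh : 0 ≤ h) {c : ℂ} {r : ℝ}
    (hwhr : w + h ≤ r) {S : Finset (ℤ × ℤ)}
    (hS : ∀ mn ∈ S,
      (∃ z ∈ gridCell w h mn, dist z c ≤ r) ∧ ∃ z ∈ gridCell w h mn, r ≤ dist z c) :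
    S.card * (w * h) ≤ 4 * Real.pi * r * (w + h) := by
  have hA := ofReal_card_mul_le_volume_of_gridCell_subset hw fun mn hmn =>
    have ⟨⟨_, hz₀, hz₀c⟩, _, hz₁, hz₁c⟩ := hS mn hmn
    gridCell_subset_closedBall_diff_ball hz₀ hz₀c hz₁ hz₁c
  rw [volume_closedBall_diff_ball c (by linarith) (by linarith),
    ENNReal.ofReal_le_ofReal_iff (mul_nonneg Real.pi_pos.le (by nlinarith))] at hA
  exact hA.trans_eq (by ring)

theorem card_mul_le_of_gridCell_meets_closedBall (hw : 0 ≤ w) (hh : 0 ≤ h) {c : ℂ} {r : ℝ}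
    (hr : 0 ≤ r) {S : Finset (ℤ × ℤ)}
    (hS : ∀ mn ∈ S, ∃ z ∈ gridCell w h mn, dist z c ≤ r) :
    S.card * (w * h) ≤ 4 * (r + w) * (r + h) := by
  have hA := ofReal_card_mul_le_volume_of_gridCell_subset hw fun mn hmn =>
    have ⟨_, hz₀, hz₀c⟩ := hS mn hmn
    gridCell_subset_reProdIm_Icc hz₀ hz₀c
  rw [volume_reProdIm, Real.volume_Icc, Real.volume_Icc, ← ENNReal.ofReal_mul (by linarith),
    ENNReal.ofReal_le_ofReal_iff (by nlinarith)] at hA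
  exact hA.trans_eq (by ring)

end GridCell

/-- Wasted-cell bound: grid cells of size `εW × (1+γ)εW` that intersect a
circle of radius `r_c` (with `2r_c ≥ W`) without being contained in it have
total area at most `(1+γ)·16ε·Area(C)`. -/
theorem stmt15 (W ε γ cx cy r_c : ℝ) (hW : 0 < W) (hε0 : 0 < ε) (hε : ε ≤ 1 / 8)
    (hγ : 0 ≤ γ) (hrc : W ≤ 2 * r_c)
    (S : Finset (ℤ × ℤ))
    (hS : ∀ mn ∈ S,
      (∃ zx zy : ℝ, (mn.1 : ℝ) * (ε * W) ≤ zx ∧ zx ≤ ((mn.1 : ℝ) + 1) * (ε * W) ∧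
        (mn.2 : ℝ) * ((1 + γ) * ε * W) ≤ zy ∧ zy ≤ ((mn.2 : ℝ) + 1) * ((1 + γ) * ε * W) ∧
        (zx - cx) ^ 2 + (zy - cy) ^ 2 < r_c ^ 2) ∧
      (∃ zx zy : ℝ, (mn.1 : ℝ) * (ε * W) ≤ zx ∧ zx ≤ ((mn.1 : ℝ) + 1) * (ε * W) ∧
        (mn.2 : ℝ) * ((1 + γ) * ε * W) ≤ zy ∧ zy ≤ ((mn.2 : ℝ) + 1) * ((1 + γ) * ε * W) ∧
        (zx - cx) ^ 2 + (zy - cy) ^ 2 ≥ r_c ^ 2)) :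
    (S.card : ℝ) * (ε * W * ((1 + γ) * ε * W)) ≤
      (1 + γ) * 16 * ε * (Real.pi * r_c ^ 2) := by
  set w := ε * W
  set h := (1 + γ) * ε * W
  set c : ℂ := ⟨cx, cy⟩
  have hr : 0 ≤ r_c := by linarith
  have hw₀ : 0 < w := by positivity
  have hh₀ : 0 < h := by positivity
  have hw : w ≤ 2 * ε * r_c := by nlinarith
  have hh : h ≤ 2 * (1 + γ) * ε * r_c := by nlinarith
  have hcells : ∀ mn ∈ S, (∃ z ∈ gridCell w h mn, dist z c ≤ r_c) ∧
      ∃ z ∈ gridCell w h mn, r_c ≤ dist z c := by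
    intro mn hmn
    obtain ⟨⟨x, y, hx₁, hx₂, hy₁, hy₂, hin⟩, ⟨x', y', hx₁', hx₂', hy₁', hy₂', hout⟩⟩ := hS mn hmn
    exact ⟨⟨⟨x, y⟩, ⟨⟨hx₁, hx₂⟩, hy₁, hy₂⟩, (dist_le_iff_sq hr).mpr hin.le⟩,
      ⟨x', y'⟩, ⟨⟨hx₁', hx₂'⟩, hy₁', hy₂'⟩, (le_dist_iff_sq hr).mpr hout⟩
  by_cases hd : w + h ≤ r_c
  · calc _ ≤ 4 * Real.pi * r_c * (w + h) :=
          card_mul_le_of_gridCell_meets_sphere hw₀.le hh₀.le hd hcells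
      _ ≤ 4 * Real.pi * r_c * (4 * ((1 + γ) * ε) * r_c) := by gcongr; nlinarith
      _ = _ := by ring
  · have hw' : w ≤ r_c / 4 := by nlinarith
    calc _ ≤ 4 * (r_c + w) * (r_c + h) :=
          card_mul_le_of_gridCell_meets_closedBall hw₀.le hh₀.le hr fun mn hmn =>
            (hcells mn hmn).1
      _ ≤ 4 * Real.pi * r_c * h := by
        nlinarith [mul_le_mul_of_nonneg_left (not_le.mp hd).le hr,
          mul_le_mul_of_nonneg_right hw' (by linarith : 0 ≤ r_c + h),
          mul_le_mul_of_nonneg_left Real.pi_gt_three.le (mul_nonneg hr hh₀.le)]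
      _ ≤ 4 * Real.pi * r_c * (2 * (1 + γ) * ε * r_c) := by gcongr
      _ ≤ _ := by
        nlinarith [Real.pi_pos, mul_nonneg (mul_nonneg hr hr) (by positivity : 0 ≤ (1 + γ) * ε)]
end

section
/- Let n circles with radii r_1 ≥ r_2 ≥ … ≥ r_n be partitioned into consecutive groups of size Q (the last possibly smaller). Create instance C' by replacing every radius in each group with the smallest radius of that group. Then: (a) OPT(C') ≤ OPT(C), where OPT denotes the minimum number of w×h bins needed; and (b) given any bin packing P' of C' using N bins, there is a packing of C using at most N + Q bins: pack the first group (at most Q circles) one per new bin, and map every other circle of C injectively to a circle of C' of radius at least as large, placing it at that circle's position in P'. -/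
/-- A packing of `n` circles of radii `r` into `N` bins of size `w × h`:
every circle lies inside its bin, and circles in the same bin are disjoint. -/
def IsPacking (n : ℕ) (r : Fin n → ℝ) (w h : ℝ) (N : ℕ)
    (b : Fin n → Fin N) (x y : Fin n → ℝ) : Prop :=
  (∀ i, r i ≤ x i ∧ x i ≤ w - r i ∧ r i ≤ y i ∧ y i ≤ h - r i) ∧
  (∀ i j, i ≠ j → b i = b j →
    (x i - x j) ^ 2 + (y i - y j) ^ 2 ≥ (r i + r j) ^ 2)

/-- The minimum number of `w × h` bins needed to pack the circles. -/
noncomputable def OPTbins (n : ℕ) (r : Fin n → ℝ) (w h : ℝ) : ℕ :=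
  sInf {N | ∃ b x y, IsPacking n r w h N b x y}

/-- Linear grouping: rounding radii down to the group minimum does not increase
the optimum, and any packing of the rounded instance on `N` bins yields a
packing of the original instance on at most `N + Q` bins. -/
theorem stmt17 (n Q : ℕ) (hn : 0 < n) (hQ : 0 < Q) (w h : ℝ)
    (r : Fin n → ℝ) (hr : ∀ i, 0 < r i ∧ 2 * r i ≤ min w h)
    (hsort : ∀ i j : Fin n, i ≤ j → r j ≤ r i)
    (r' : Fin n → ℝ)
    (hr' : ∀ i : Fin n,
      r' i = r ⟨min (Q * (↑i / Q) + (Q - 1)) (n - 1), by omega⟩) :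
    OPTbins n r' w h ≤ OPTbins n r w h ∧
    ∀ (N : ℕ) (b : Fin n → Fin N) (x y : Fin n → ℝ),
      IsPacking n r' w h N b x y →
      ∃ (b2 : Fin n → Fin (N + Q)) (x2 y2 : Fin n → ℝ),
        IsPacking n r w h (N + Q) b2 x2 y2 := by
  have hr'le : ∀ i, r' i ≤ r i := by
    intro i
    rw [hr' i]
    apply hsort
    rw [Fin.le_def]
    have h1 := Nat.div_add_mod i.1 Q
    have h2 := Nat.mod_lt i.1 hQ
    have h3 := i.2
    simp only
    omega
  have hr'pos : ∀ i, 0 < r' i := by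
    intro i; rw [hr' i]; exact (hr _).1
  have hw : ∀ i, 2 * r i ≤ w := fun i => le_trans (hr i).2 (min_le_left _ _)
  have hh : ∀ i, 2 * r i ≤ h := fun i => le_trans (hr i).2 (min_le_right _ _)
  have hrpos : ∀ i, 0 < r i := fun i => (hr i).1
  constructor
  · -- part (a)
    have hne : ∃ b x y, IsPacking n r w h n b x y := by
      refine ⟨id, r, r, fun i => ⟨le_refl _, by linarith [hw i], le_refl _, by linarith [hh i]⟩,
        fun i j hij hb => absurd hb hij⟩
    have hmem : OPTbins n r w h ∈ {N | ∃ b x y, IsPacking n r w h N b x y} :=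
      Nat.sInf_mem ⟨n, hne⟩
    obtain ⟨b, x, y, hp1, hp2⟩ := hmem
    apply Nat.sInf_le
    refine ⟨b, x, y, fun i => ?_, fun i j hij hb => ?_⟩
    · obtain ⟨a1, a2, a3, a4⟩ := hp1 i
      exact ⟨le_trans (hr'le i) a1, by linarith [hr'le i], le_trans (hr'le i) a3,
        by linarith [hr'le i]⟩
    · refine le_trans ?_ (hp2 i j hij hb)
      apply pow_le_pow_left₀ (add_nonneg (hr'pos i).le (hr'pos j).le)
      exact add_le_add (hr'le i) (hr'le j)
  · -- part (b)
    intro N b x y hp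
    have key : ∀ (i : Fin n) (hi : Q ≤ i.1), r i ≤ r' ⟨i.1 - Q, by omega⟩ := by
      intro i hi
      rw [hr' _]
      apply hsort
      rw [Fin.le_def]
      have h1 := Nat.div_mul_le_self (i.1 - Q) Q
      have h2 : Q * ((i.1 - Q) / Q) = (i.1 - Q) / Q * Q := Nat.mul_comm _ _
      simp only
      omega
    refine ⟨fun i => if hi : i.1 < Q then ⟨N + i.1, by omega⟩
            else Fin.castLE (by omega) (b ⟨i.1 - Q, by omega⟩),
           fun i => if i.1 < Q then r i else x ⟨i.1 - Q, by omega⟩,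
           fun i => if i.1 < Q then r i else y ⟨i.1 - Q, by omega⟩, ?_, ?_⟩
    · intro i
      by_cases hi : i.1 < Q
      · simp only [hi, if_true]
        exact ⟨le_refl _, by linarith [hw i], le_refl _, by linarith [hh i]⟩
      · simp only [hi, if_false]
        push_neg at hi
        obtain ⟨a1, a2, a3, a4⟩ := hp.1 ⟨i.1 - Q, by omega⟩
        have hk := key i hi
        exact ⟨le_trans hk a1, by linarith, le_trans hk a3, by linarith⟩
    · intro i j hij hb
      dsimp only at hb ⊢
      have hijv : i.1 ≠ j.1 := fun e => hij (Fin.ext e)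
      by_cases hi : i.1 < Q <;> by_cases hj : j.1 < Q
      · rw [dif_pos hi, dif_pos hj] at hb
        have := congrArg Fin.val hb
        simp only at this
        omega
      · rw [dif_pos hi, dif_neg hj] at hb
        have := congrArg Fin.val hb
        simp only [Fin.coe_castLE] at this
        have := (b ⟨j.1 - Q, by omega⟩).2
        omega
      · rw [dif_neg hi, dif_pos hj] at hb
        have := congrArg Fin.val hb
        simp only [Fin.coe_castLE] at this
        have := (b ⟨i.1 - Q, by omega⟩).2
        omega
      · push_neg at hi hj
        rw [dif_neg (Nat.not_lt.mpr hi), dif_neg (Nat.not_lt.mpr hj)] at hb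
        simp only [if_neg (Nat.not_lt.mpr hi), if_neg (Nat.not_lt.mpr hj)]
        have hbeq : b ⟨i.1 - Q, by omega⟩ = b ⟨j.1 - Q, by omega⟩ := by
          apply Fin.ext
          have := congrArg Fin.val hb
          simpa using this
        have hne : (⟨i.1 - Q, by omega⟩ : Fin n) ≠ ⟨j.1 - Q, by omega⟩ := by
          intro e
          have := congrArg Fin.val e
          simp only at this
          omega
        have hd := hp.2 _ _ hne hbeq
        refine le_trans ?_ hd
        apply pow_le_pow_left₀ (add_nonneg (hrpos i).le (hrpos j).le)
        exact add_le_add (key i hi) (key j hj)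
end

section
/- Let circles of total area A be packed into N bins of size w × h, and suppose h/w ≥ 1/ε² for some 0 < ε < 1. Split each bin into ⌈h/(w/ε)⌉ horizontal sub-bins of size w × (w/ε) (truncating at the top). Then the total area of circles intersecting more than one sub-bin (i.e., crossing a horizontal cut line) is at most N·2w²·⌊hε/w⌋ ≤ 2ε·N·wh. -/
/-!
A circle crossing the cut line at height `c` has diameter at most `w`, so it lies in the
`w × 2w` rectangle `[0, w] × [c - w, c + w]`. Disjoint discs inside a rectangle have total area
at most that of the rectangle (compare Lebesgue measures in `ℂ`), so the circles of one bin
crossing one line have total area at most `2w²`. Summing over the `N · ⌊hε/w⌋` pairs of a bin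
and a line, each crossing circle being counted at least once, gives the bound.
-/

open MeasureTheory Metric Set

namespace Finset

theorem sum_le_sum_sum_filter_of_forall_exists {ι κ M : Type*} [AddCommMonoid M] [PartialOrder M]
    [IsOrderedAddMonoid M] (s : Finset ι) (t : Finset κ) (R : ι → κ → Prop)
    [∀ i p, Decidable (R i p)] {f : ι → M} (hf : ∀ i ∈ s, 0 ≤ f i)
    (hcover : ∀ i ∈ s, ∃ p ∈ t, R i p) :
    ∑ i ∈ s, f i ≤ ∑ p ∈ t, ∑ i ∈ s with R i p, f i := by
  calc ∑ i ∈ s, f i ≤ ∑ i ∈ s, ∑ p ∈ t with R i p, f i := by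
        refine sum_le_sum fun i hi => ?_
        obtain ⟨p, hp, hRp⟩ := hcover i hi
        exact single_le_sum (f := fun _ => f i) (fun _ _ => hf i hi) (mem_filter.2 ⟨hp, hRp⟩)
    _ = ∑ p ∈ t, ∑ i ∈ s with R i p, f i :=
        sum_comm' fun i p => by simp only [mem_filter]; tauto

end Finset

theorem Complex.volume_reProdIm_s18 {s t : Set ℝ} (hs : MeasurableSet s) (ht : MeasurableSet t) :
    volume (s ×ℂ t) = volume s * volume t := by
  change volume (Complex.measurableEquivRealProd ⁻¹' (s ×ˢ t)) = _
  rw [Complex.volume_preserving_equiv_real_prod.measure_preimage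
    (hs.prod ht).nullMeasurableSet, Measure.volume_eq_prod, Measure.prod_prod]

theorem Complex.ball_subset_reProdIm_Icc {z : ℂ} {r a₀ b₀ a₁ b₁ : ℝ}
    (h₀ : a₀ ≤ z.re - r) (h₀' : z.re + r ≤ b₀) (h₁ : a₁ ≤ z.im - r) (h₁' : z.im + r ≤ b₁) :
    ball z r ⊆ Icc a₀ b₀ ×ℂ Icc a₁ b₁ := by
  intro u hu
  rw [mem_ball, dist_eq_norm] at hu
  have hre := (abs_le.1 ((Complex.abs_re_le_norm (u - z)).trans hu.le))
  have him := (abs_le.1 ((Complex.abs_im_le_norm (u - z)).trans hu.le))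
  simp only [Complex.sub_re, Complex.sub_im] at hre him
  exact ⟨⟨by linarith, by linarith⟩, ⟨by linarith, by linarith⟩⟩

theorem Complex.disjoint_ball_of_sq_add_sq {x₁ y₁ x₂ y₂ r₁ r₂ : ℝ}
    (h : (r₁ + r₂) ^ 2 ≤ (x₁ - x₂) ^ 2 + (y₁ - y₂) ^ 2) :
    Disjoint (ball (⟨x₁, y₁⟩ : ℂ) r₁) (ball ⟨x₂, y₂⟩ r₂) :=
  ball_disjoint_ball <| by
    rw [Complex.dist_eq_re_im]
    exact (le_abs_self _).trans (Real.abs_le_sqrt h)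

theorem ofReal_sum_pi_mul_sq_le_volume {ι : Type*} (s : Finset ι) (c : ι → ℂ) (r : ι → ℝ)
    (hr : ∀ i ∈ s, 0 ≤ r i) (hdisj : (s : Set ι).PairwiseDisjoint fun i => ball (c i) (r i))
    {K : Set ℂ} (hK : ∀ i ∈ s, ball (c i) (r i) ⊆ K) :
    ENNReal.ofReal (∑ i ∈ s, Real.pi * r i ^ 2) ≤ volume K := by
  calc ENNReal.ofReal (∑ i ∈ s, Real.pi * r i ^ 2)
      = ∑ i ∈ s, volume (ball (c i) (r i)) := by
        rw [ENNReal.ofReal_sum_of_nonneg fun i hi => by positivity]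
        refine Finset.sum_congr rfl fun i hi => ?_
        rw [Complex.volume_ball, ← ENNReal.ofReal_pow (hr i hi), ← NNReal.coe_real_pi,
          ENNReal.ofReal_mul NNReal.pi.coe_nonneg, ENNReal.ofReal_coe_nnreal, mul_comm]
    _ = volume (⋃ i ∈ s, ball (c i) (r i)) :=
        (measure_biUnion_finset hdisj fun i _ => measurableSet_ball).symm
    _ ≤ volume K := measure_mono (iUnion₂_subset hK)

theorem sum_pi_mul_sq_le_of_cross_line {ι : Type*} (s : Finset ι) (x y r : ι → ℝ) {w c : ℝ}
    (hw : 0 ≤ w) (hr : ∀ i ∈ s, 0 ≤ r i) (hx : ∀ i ∈ s, r i ≤ x i ∧ x i ≤ w - r i)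
    (hcross : ∀ i ∈ s, y i - r i < c ∧ c < y i + r i)
    (hdisj : ∀ i ∈ s, ∀ j ∈ s, i ≠ j → (r i + r j) ^ 2 ≤ (x i - x j) ^ 2 + (y i - y j) ^ 2) :
    ∑ i ∈ s, Real.pi * r i ^ 2 ≤ 2 * w ^ 2 := by
  have hball : ∀ i ∈ s, ball (⟨x i, y i⟩ : ℂ) (r i) ⊆ Icc 0 w ×ℂ Icc (c - w) (c + w) := by
    intro i hi
    obtain ⟨hx₀, hx₁⟩ := hx i hi
    obtain ⟨hy₀, hy₁⟩ := hcross i hi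
    exact Complex.ball_subset_reProdIm_Icc (by dsimp only; linarith) (by dsimp only; linarith)
      (by dsimp only; linarith) (by dsimp only; linarith)
  have key := ofReal_sum_pi_mul_sq_le_volume s _ r hr
    (fun i hi j hj hij => Complex.disjoint_ball_of_sq_add_sq (hdisj i hi j hj hij)) hball
  rw [Complex.volume_reProdIm_s18 measurableSet_Icc measurableSet_Icc, Real.volume_Icc,
    Real.volume_Icc, ← ENNReal.ofReal_mul (by linarith),
    ENNReal.ofReal_le_ofReal_iff (by nlinarith)] at key
  linarith

open Classical in
theorem stmt18_general (n N : ℕ) (w h ε : ℝ)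
    (hw : 0 < w) (hh : 0 < h) (hε0 : 0 < ε)
    (r x y : Fin n → ℝ) (b : Fin n → Fin N)
    (hr : ∀ i, 0 < r i)
    (hin : ∀ i, r i ≤ x i ∧ x i ≤ w - r i ∧ r i ≤ y i ∧ y i ≤ h - r i)
    (hdisj : ∀ i j, i ≠ j → b i = b j →
      (x i - x j) ^ 2 + (y i - y j) ^ 2 ≥ (r i + r j) ^ 2) :
    (∑ i ∈ Finset.univ.filter (fun i : Fin n => ∃ k : ℕ, 1 ≤ k ∧ k ≤ ⌊h * ε / w⌋₊ ∧
        y i - r i < (k : ℝ) * (w / ε) ∧ (k : ℝ) * (w / ε) < y i + r i),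
      Real.pi * r i ^ 2) ≤ (N : ℝ) * (2 * w ^ 2) * (⌊h * ε / w⌋₊ : ℝ) ∧
    (N : ℝ) * (2 * w ^ 2) * (⌊h * ε / w⌋₊ : ℝ) ≤ 2 * ε * N * (w * h) := by
  set m := ⌊h * ε / w⌋₊
  set cut : ℕ → ℝ := fun k => k * (w / ε)
  refine ⟨?_, ?_⟩
  · calc _ ≤ ∑ p ∈ Finset.univ ×ˢ Finset.Icc 1 m, ∑ i ∈ Finset.univ.filter (fun i => ∃ k : ℕ,
            1 ≤ k ∧ k ≤ m ∧ y i - r i < cut k ∧ cut k < y i + r i)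
              with b i = p.1 ∧ y i - r i < cut p.2 ∧ cut p.2 < y i + r i, Real.pi * r i ^ 2 :=
          Finset.sum_le_sum_sum_filter_of_forall_exists _ _ _ (fun i _ => by positivity)
            fun i hi => by
              obtain ⟨k, hk₁, hkm, hcross⟩ := (Finset.mem_filter.1 hi).2
              exact ⟨(b i, k), by simp [hk₁, hkm], rfl, hcross⟩
      _ ≤ ∑ _p ∈ Finset.univ ×ˢ Finset.Icc 1 m, 2 * w ^ 2 := by
          refine Finset.sum_le_sum fun p _ => sum_pi_mul_sq_le_of_cross_line _ x y r hw.le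
            (fun i _ => (hr i).le) (fun i _ => ⟨(hin i).1, (hin i).2.1⟩)
            (fun i hi => (Finset.mem_filter.1 hi).2.2) fun i hi j hj hij => ?_
          exact hdisj i j hij
            ((Finset.mem_filter.1 hi).2.1.trans (Finset.mem_filter.1 hj).2.1.symm)
      _ = N * (2 * w ^ 2) * m := by
          simp only [Finset.sum_const, Finset.card_product, Finset.card_univ, Fintype.card_fin,
            Nat.card_Icc, add_tsub_cancel_right, nsmul_eq_mul, Nat.cast_mul]
          ring
  · calc (N : ℝ) * (2 * w ^ 2) * m ≤ N * (2 * w ^ 2) * (h * ε / w) := by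
          gcongr; exact Nat.floor_le (by positivity)
      _ = 2 * ε * N * (w * h) := by field_simp

open Classical in
/-- Circles crossing the horizontal cut lines at heights `k·(w/ε)` have total
area at most `N·2w²·⌊hε/w⌋ ≤ 2ε·N·wh`. -/
theorem stmt18 (n N : ℕ) (w h ε : ℝ)
    (hw : 0 < w) (hh : 0 < h) (hε0 : 0 < ε) (hε1 : ε < 1)
    (hratio : h / w ≥ 1 / ε ^ 2)
    (r x y : Fin n → ℝ) (b : Fin n → Fin N)
    (hr : ∀ i, 0 < r i)
    (hin : ∀ i, r i ≤ x i ∧ x i ≤ w - r i ∧ r i ≤ y i ∧ y i ≤ h - r i)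
    (hdisj : ∀ i j, i ≠ j → b i = b j →
      (x i - x j) ^ 2 + (y i - y j) ^ 2 ≥ (r i + r j) ^ 2) :
    (∑ i ∈ Finset.univ.filter (fun i : Fin n => ∃ k : ℕ, 1 ≤ k ∧ k ≤ ⌊h * ε / w⌋₊ ∧
        y i - r i < (k : ℝ) * (w / ε) ∧ (k : ℝ) * (w / ε) < y i + r i),
      Real.pi * r i ^ 2) ≤ (N : ℝ) * (2 * w ^ 2) * (⌊h * ε / w⌋₊ : ℝ) ∧
    (N : ℝ) * (2 * w ^ 2) * (⌊h * ε / w⌋₊ : ℝ) ≤ 2 * ε * N * (w * h) :=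
  stmt18_general n N w h ε hw hh hε0 r x y b hr hin hdisj
end
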